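/- arXiv:1010.1095 — 2 statements merged into one kernel-verified Lean document; each statement's English description precedes it below -/
import Mathlib

section
/- Let A be the algebra over C with invertible generators h, g satisfying hg = ε^d gh for ε a primitive l-th root of unity with gcd(l,d)=1. Then every irreducible finite-dimensional representation of A on which h^l and g^l act by fixed nonzero scalars α, β has dimension l, and such a representation is unique up to isomorphism (determined by the central character (α, β)). -/
/-!
Pick an eigenvector `v` of `H`, with eigenvalue `μ`. Since `H G = q G H` with `q = ε ^ d` a
primitive `l`-th root of unity, the vectors `G ^ i v` (`0 ≤ i < l`) are eigenvectors of `H` for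
the distinct eigenvalues `q ^ i μ`, hence linearly independent; because `G ^ l = β`, their span
is stable under `H` and `G`, so by irreducibility they form a basis, in which `H` and `G` act by
matrices depending only on `μ`, `q` and `β`. Moreover `μ ^ l = α`, and in a second
representation an eigenvalue `ν` of `H` with `ν ^ l = α` can be moved to `μ = q ^ m ν` by
applying `G ^ m`, so both representations have the same matrices.
-/

open Module

section Algebra

variable {R A : Type*} [CommSemiring R] [Semiring A] [Algebra R A] {h g : A} {q β : R}

theorem mul_pow_eq_smul_pow_mul (hrel : h * g = q • (g * h)) (n : ℕ) :
    h * g ^ n = q ^ n • (g ^ n * h) := by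
  induction n with
  | zero => simp
  | succ n ih =>
    calc h * g ^ (n + 1) = q • (g * (h * g ^ n)) := by
          rw [pow_succ', ← mul_assoc, hrel, smul_mul_assoc, mul_assoc]
    _ = q ^ (n + 1) • (g ^ (n + 1) * h) := by
          rw [ih, mul_smul_comm, smul_smul, ← pow_succ', pow_succ' g, mul_assoc]

theorem pow_eq_smul_pow_mod {l : ℕ} (hgl : g ^ l = β • 1) (n : ℕ) :
    g ^ n = β ^ (n / l) • g ^ (n % l) := by
  conv_lhs => rw [← Nat.div_add_mod n l, pow_add, pow_mul, hgl, smul_pow, one_pow, smul_mul_assoc,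
    one_mul]

end Algebra

namespace Module.End

variable {K V : Type*} [Field K] [AddCommGroup V] [Module K V] {H G : End K V} {q β μ : K}
  {l : ℕ} {v : V}

theorem apply_pow_apply_eq_smul (hrel : H * G = q • (G * H)) (hv : H v = μ • v) (n : ℕ) :
    H ((G ^ n) v) = (q ^ n * μ) • (G ^ n) v := by
  have := LinearMap.congr_fun (mul_pow_eq_smul_pow_mul hrel n) v
  simp only [mul_apply, LinearMap.smul_apply] at this
  rw [this, hv, map_smul, smul_smul]

theorem HasEigenvector.pow_apply_of_mul_eq_smul (hrel : H * G = q • (G * H))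
    (hG : Function.Injective G) (hv : H.HasEigenvector μ v) (n : ℕ) :
    H.HasEigenvector (q ^ n * μ) ((G ^ n) v) := by
  refine ⟨mem_eigenspace_iff.mpr (apply_pow_apply_eq_smul hrel hv.apply_eq_smul n), ?_⟩
  rw [coe_pow]
  exact (hG.iterate n).ne_iff' (Function.iterate_fixed (map_zero G) n) |>.mpr hv.2

theorem HasEigenvector.pow_eq_of_pow_eq_smul_one {α : K} (hv : H.HasEigenvector μ v)
    (hHl : H ^ l = α • 1) : μ ^ l = α := by
  have := hv.pow_apply l
  rw [hHl, LinearMap.smul_apply, one_apply] at this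
  exact smul_left_injective K hv.2 this.symm

theorem exists_hasEigenvector_of_pow_eq_pow (hl : 0 < l) (hq : IsPrimitiveRoot q l)
    (hrel : H * G = q • (G * H)) (hG : Function.Injective G) {ν : K} (hv : H.HasEigenvector ν v)
    (hν : ν ≠ 0) (hμν : μ ^ l = ν ^ l) : ∃ w, H.HasEigenvector μ w := by
  have : NeZero l := ⟨hl.ne'⟩
  obtain ⟨m, -, hm⟩ := hq.eq_pow_of_pow_eq_one (ξ := μ / ν)
    (by rw [div_pow, hμν, div_self (pow_ne_zero l hν)])
  have := hv.pow_apply_of_mul_eq_smul hrel hG m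
  rw [hm, div_mul_cancel₀ _ hν] at this
  exact ⟨_, this⟩

theorem linearIndependent_pow_apply (hq : IsPrimitiveRoot q l) (hrel : H * G = q • (G * H))
    (hG : Function.Injective G) (hv : H.HasEigenvector μ v) (hμ : μ ≠ 0) :
    LinearIndependent K fun i : Fin l => (G ^ (i : ℕ)) v :=
  eigenvectors_linearIndependent' H (fun i : Fin l => q ^ (i : ℕ) * μ)
    (fun i j hij => Fin.ext (hq.pow_inj i.isLt j.isLt (mul_right_cancel₀ hμ hij))) _
    fun i => hv.pow_apply_of_mul_eq_smul hrel hG i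

theorem pow_apply_mem_span_pow_apply (hl : 0 < l) (hGl : G ^ l = β • 1) (n : ℕ) :
    (G ^ n) v ∈ Submodule.span K (Set.range fun i : Fin l => (G ^ (i : ℕ)) v) := by
  rw [pow_eq_smul_pow_mod hGl n, LinearMap.smul_apply]
  exact Submodule.smul_mem _ _ (Submodule.subset_span ⟨⟨n % l, Nat.mod_lt n hl⟩, rfl⟩)

theorem span_pow_apply_eq_top (hl : 0 < l) (hrel : H * G = q • (G * H))
    (hG : Function.Injective G) (hGl : G ^ l = β • 1)
    (hirr : ∀ U : Submodule K V, U.map H ≤ U → U.map G ≤ U → U = ⊥ ∨ U = ⊤)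
    (hv : H.HasEigenvector μ v) :
    Submodule.span K (Set.range fun i : Fin l => (G ^ (i : ℕ)) v) = ⊤ := by
  refine (hirr _ ?_ ?_).resolve_left fun hbot => hv.2 ?_
  · rw [Submodule.map_span_le]
    rintro - ⟨i, rfl⟩
    rw [(hv.pow_apply_of_mul_eq_smul hrel hG i).apply_eq_smul]
    exact Submodule.smul_mem _ _ (Submodule.subset_span ⟨i, rfl⟩)
  · rw [Submodule.map_span_le]
    rintro - ⟨i, rfl⟩
    rw [← mul_apply, ← pow_succ']
    exact pow_apply_mem_span_pow_apply hl hGl _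
  · simpa [hbot] using pow_apply_mem_span_pow_apply (v := v) hl hGl 0

theorem exists_basis_pow_apply (hl : 0 < l) (hq : IsPrimitiveRoot q l)
    (hrel : H * G = q • (G * H)) (hG : Function.Injective G) (hGl : G ^ l = β • 1)
    (hirr : ∀ U : Submodule K V, U.map H ≤ U → U.map G ≤ U → U = ⊥ ∨ U = ⊤)
    (hv : H.HasEigenvector μ v) (hμ : μ ≠ 0) :
    ∃ b : Basis (Fin l) K V, ∀ i, b i = (G ^ (i : ℕ)) v :=
  ⟨Basis.mk (linearIndependent_pow_apply hq hrel hG hv hμ)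
    (span_pow_apply_eq_top hl hrel hG hGl hirr hv).ge, Basis.mk_apply _ _⟩

theorem exists_linearEquiv_intertwining {W : Type*} [AddCommGroup W] [Module K W]
    {H' G' : End K W} {w : W} (hl : 0 < l) (hrel : H * G = q • (G * H))
    (hrel' : H' * G' = q • (G' * H'))
    (hGl : G ^ l = β • 1) (hGl' : G' ^ l = β • 1) (hv : H v = μ • v) (hw : H' w = μ • w)
    (b : Basis (Fin l) K V) (b' : Basis (Fin l) K W) (hb : ∀ i, b i = (G ^ (i : ℕ)) v)
    (hb' : ∀ i, b' i = (G' ^ (i : ℕ)) w) :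
    ∃ e : V ≃ₗ[K] W, (∀ x, e (H x) = H' (e x)) ∧ (∀ x, e (G x) = G' (e x)) := by
  set e := b.equiv b' (Equiv.refl _)
  have he : ∀ i, e (b i) = b' i := fun i => b.equiv_apply i b' _
  have he_pow : ∀ n : ℕ, e ((G ^ n) v) = (G' ^ n) w := by
    intro n
    rw [pow_eq_smul_pow_mod hGl, pow_eq_smul_pow_mod hGl', LinearMap.smul_apply,
      LinearMap.smul_apply, map_smul]
    have := he ⟨n % l, Nat.mod_lt n hl⟩
    rw [hb, hb'] at this
    rw [this]
  refine ⟨e, fun x => ?_, fun x => ?_⟩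
  · refine LinearMap.congr_fun
      (b.ext (f₁ := e.toLinearMap ∘ₗ H) (f₂ := H' ∘ₗ e.toLinearMap) fun i => ?_) x
    simp only [LinearMap.comp_apply, LinearEquiv.coe_coe, hb, apply_pow_apply_eq_smul hrel hv,
      apply_pow_apply_eq_smul hrel' hw, map_smul, he_pow]
  · refine LinearMap.congr_fun
      (b.ext (f₁ := e.toLinearMap ∘ₗ G) (f₂ := G' ∘ₗ e.toLinearMap) fun i => ?_) x
    simp only [LinearMap.comp_apply, LinearEquiv.coe_coe, hb, he_pow, ← mul_apply, ← pow_succ']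

end Module.End

open Module.End in
theorem stmt12_general {l : ℕ} (hl : 0 < l) {ε : ℂ} (hε : IsPrimitiveRoot ε l)
    (d : ℤ) (hcop : IsCoprime (l : ℤ) d)
    (α β : ℂ) (hα : α ≠ 0)
    {V W : Type*} [AddCommGroup V] [Module ℂ V] [AddCommGroup W] [Module ℂ W]
    [Nontrivial V] [FiniteDimensional ℂ V] [Nontrivial W] [FiniteDimensional ℂ W]
    (Hv Gv : Module.End ℂ V) (Hw Gw : Module.End ℂ W)
    (hGv : IsUnit Gv) (hGw : IsUnit Gw)
    (hrelV : Hv * Gv = ε ^ d • (Gv * Hv)) (hrelW : Hw * Gw = ε ^ d • (Gw * Hw))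
    (hHlV : Hv ^ l = α • (1 : Module.End ℂ V)) (hGlV : Gv ^ l = β • (1 : Module.End ℂ V))
    (hHlW : Hw ^ l = α • (1 : Module.End ℂ W)) (hGlW : Gw ^ l = β • (1 : Module.End ℂ W))
    (hirrV : ∀ U : Submodule ℂ V, U.map Hv ≤ U → U.map Gv ≤ U → U = ⊥ ∨ U = ⊤)
    (hirrW : ∀ U : Submodule ℂ W, U.map Hw ≤ U → U.map Gw ≤ U → U = ⊥ ∨ U = ⊤) :
    Module.finrank ℂ V = l ∧
      ∃ e : V ≃ₗ[ℂ] W, (∀ v, e (Hv v) = Hw (e v)) ∧ (∀ v, e (Gv v) = Gw (e v)) := by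
  have hq : IsPrimitiveRoot (ε ^ d) l :=
    hε.zpow_of_gcd_eq_one d (by rw [Int.gcd_comm]; exact Int.isCoprime_iff_gcd_eq_one.mp hcop)
  have hGv' := ((isUnit_iff Gv).mp hGv).injective
  have hGw' := ((isUnit_iff Gw).mp hGw).injective
  obtain ⟨μ, hμ⟩ := exists_eigenvalue Hv
  obtain ⟨v, hv⟩ := hμ.exists_hasEigenvector
  obtain ⟨ν, hν⟩ := exists_eigenvalue Hw
  obtain ⟨w₀, hw₀⟩ := hν.exists_hasEigenvector
  have hμl := hv.pow_eq_of_pow_eq_smul_one hHlV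
  have hνl := hw₀.pow_eq_of_pow_eq_smul_one hHlW
  have hμ0 : μ ≠ 0 := ne_zero_pow hl.ne' (hμl ▸ hα)
  have hν0 : ν ≠ 0 := ne_zero_pow hl.ne' (hνl ▸ hα)
  obtain ⟨w, hw⟩ :=
    exists_hasEigenvector_of_pow_eq_pow hl hq hrelW hGw' hw₀ hν0 (hμl.trans hνl.symm)
  obtain ⟨bV, hbV⟩ := exists_basis_pow_apply hl hq hrelV hGv' hGlV hirrV hv hμ0
  obtain ⟨bW, hbW⟩ := exists_basis_pow_apply hl hq hrelW hGw' hGlW hirrW hw hμ0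
  exact ⟨by rw [finrank_eq_card_basis bV, Fintype.card_fin], exists_linearEquiv_intertwining
    hl hrelV hrelW hGlV hGlW hv.apply_eq_smul hw.apply_eq_smul bV bW hbV hbW⟩

/-- for `A = ℂ⟨h^{±1}, g^{±1}⟩/(hg - ε^d gh)` with `ε` a primitive
`l`-th root of unity and `gcd(l,d) = 1`, every irreducible finite-dimensional
representation on which `h^l, g^l` act by fixed nonzero scalars `α, β` has dimension
`l`, and any two such representations are isomorphic. -/
theorem stmt12 {l : ℕ} (hl : 0 < l) {ε : ℂ} (hε : IsPrimitiveRoot ε l)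
    (d : ℤ) (hcop : IsCoprime (l : ℤ) d)
    (α β : ℂ) (hα : α ≠ 0) (hβ : β ≠ 0)
    {V W : Type*} [AddCommGroup V] [Module ℂ V] [AddCommGroup W] [Module ℂ W]
    [Nontrivial V] [FiniteDimensional ℂ V] [Nontrivial W] [FiniteDimensional ℂ W]
    (Hv Gv : Module.End ℂ V) (Hw Gw : Module.End ℂ W)
    (hHv : IsUnit Hv) (hGv : IsUnit Gv) (hHw : IsUnit Hw) (hGw : IsUnit Gw)
    (hrelV : Hv * Gv = ε ^ d • (Gv * Hv)) (hrelW : Hw * Gw = ε ^ d • (Gw * Hw))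
    (hHlV : Hv ^ l = α • (1 : Module.End ℂ V)) (hGlV : Gv ^ l = β • (1 : Module.End ℂ V))
    (hHlW : Hw ^ l = α • (1 : Module.End ℂ W)) (hGlW : Gw ^ l = β • (1 : Module.End ℂ W))
    (hirrV : ∀ U : Submodule ℂ V, U.map Hv ≤ U → U.map Gv ≤ U → U = ⊥ ∨ U = ⊤)
    (hirrW : ∀ U : Submodule ℂ W, U.map Hw ≤ U → U.map Gw ≤ U → U = ⊥ ∨ U = ⊤) :
    Module.finrank ℂ V = l ∧
      ∃ e : V ≃ₗ[ℂ] W, (∀ v, e (Hv v) = Hw (e v)) ∧ (∀ v, e (Gv v) = Gw (e v)) :=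
  stmt12_general hl hε d hcop α β hα Hv Gv Hw Gw hGv hGw hrelV hrelW hHlV hGlV hHlW hGlW hirrV hirrW
end

section
/- In the quantum Weyl algebra W at a primitive admissible l-th root of unity ε, the elements w_i := 1 + Σ_{k ≤ i}(ε^{s_k} - 1) y_k x_k satisfy: y_i w_j = ε^{-s_i} w_j y_i and x_i w_j = ε^{s_i} w_j x_i for i ≤ j, while w_j commutes with x_i and y_i for i > j; consequently w_i^l commutes with all x_j and y_j, i.e., f_i := w_i^l is central in W_ε. -/
/-!
Say that `a` and `b` are `p`-commuting when `a b = p b a`. For `k ≠ i` the generators `x_i`,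
`y_i` `p`-commute with the monomial `y_k x_k`, with `p = 1` if `k < i` and `p = q_i^{±1}` if
`k > i`. For `k = i` the defect `w_{i-1}` in `x_i y_i = q_i y_i x_i + w_{i-1}` is exactly
compensated by the summand `(q_i - 1) y_i x_i` of `w_i`, so `x_i`, `y_i` `q_i^{±1}`-commute
with `w_i`, hence with every `w_j`, `j ≥ i`, and commute with `w_j` for `j < i`. Raising `w_j`
to the `l`-th power turns the scalar into `q_i^{±l} = 1`, so `w_j^l` commutes with all
generators and is therefore central.
-/

open Finset

section QCommute

variable {R A : Type*} [CommSemiring R] [Semiring A] [Algebra R A]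

def QCommute (p : R) (a b : A) : Prop := a * b = p • (b * a)

namespace QCommute

variable {p r : R} {a b c : A}

theorem one_iff : QCommute (1 : R) a b ↔ Commute a b := by
  rw [QCommute, one_smul]
  rfl

theorem mul_right (hb : QCommute p a b) (hc : QCommute r a c) :
    QCommute (p * r) a (b * c) := by
  rw [QCommute, ← mul_assoc, hb, smul_mul_assoc, mul_assoc, hc, mul_smul_comm, smul_smul,
    mul_assoc]

theorem smul_right (hb : QCommute p a b) (r : R) : QCommute p a (r • b) := by
  rw [QCommute, mul_smul_comm, hb, smul_mul_assoc, smul_comm]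

theorem add_right (hb : QCommute p a b) (hc : QCommute p a c) : QCommute p a (b + c) := by
  rw [QCommute, mul_add, hb, hc, add_mul, smul_add]

theorem sum_right {ι : Type*} (s : Finset ι) {f : ι → A}
    (h : ∀ i ∈ s, QCommute p a (f i)) : QCommute p a (∑ i ∈ s, f i) := by
  rw [QCommute, mul_sum, sum_mul, smul_sum]
  exact sum_congr rfl h

theorem pow_right (h : QCommute p a b) : ∀ N : ℕ, QCommute (p ^ N) a (b ^ N)
  | 0 => by simp [QCommute]
  | N + 1 => by
    rw [pow_succ, pow_succ]
    exact (h.pow_right N).mul_right h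

theorem commute_pow (h : QCommute p a b) {N : ℕ} (hN : p ^ N = 1) : Commute a (b ^ N) :=
  one_iff.mp (hN ▸ h.pow_right N)

theorem symm {K : Type*} [Field K] [Algebra K A] {p : K} (hp : p ≠ 0) (h : QCommute p a b) :
    QCommute p⁻¹ b a := by
  rw [QCommute, h, smul_smul, inv_mul_cancel₀ hp, one_smul]

end QCommute

end QCommute

namespace QuantumWeyl

variable {K W : Type*} [Field K] [Ring W] [Algebra K W] {n : ℕ}

/-- Indices are `0`-based: `w q x y m` sums over `k < m`, so the paper's `w_i` is
`w q x y (i + 1)`. -/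
def w (q : Fin n → K) (x y : Fin n → W) (m : ℕ) : W :=
  1 + ∑ k ∈ univ.filter (fun k : Fin n => (k : ℕ) < m), (q k - 1) • (y k * x k)

/-- `Q i j` plays the role of the paper's `q_{ij}`. -/
structure Relations (q : Fin n → K) (Q : Fin n → Fin n → K) (x y : Fin n → W) : Prop where
  q_ne_zero : ∀ i, q i ≠ 0
  Q_mul_Q : ∀ i j, Q j i * Q i j = 1
  yy : ∀ i j, QCommute (Q i j) (y i) (y j)
  xx : ∀ i j, i < j → QCommute (q i * Q i j) (x i) (x j)
  xy_of_lt : ∀ i j, i < j → QCommute (Q j i) (x i) (y j)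
  xy_of_gt : ∀ i j, j < i → QCommute (q j * Q j i) (x i) (y j)
  xy_self : ∀ i, x i * y i = q i • (y i * x i) + w q x y i

variable {q : Fin n → K} {Q : Fin n → Fin n → K} {x y : Fin n → W}

theorem w_eq_add_sum {i m : ℕ} (h : i ≤ m) :
    w q x y m = w q x y i +
      ∑ k ∈ univ.filter (fun k : Fin n => i ≤ k ∧ (k : ℕ) < m),
        (q k - 1) • (y k * x k) := by
  have hdisj : Disjoint (univ.filter (fun k : Fin n => (k : ℕ) < i))
      (univ.filter (fun k : Fin n => i ≤ k ∧ (k : ℕ) < m)) := by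
    rw [disjoint_filter]
    omega
  rw [w, w, add_assoc, ← sum_union hdisj]
  congr 2
  ext k
  simp only [mem_filter, mem_univ, true_and, mem_union]
  omega

theorem w_succ (i : Fin n) : w q x y (i + 1) = w q x y i + (q i - 1) • (y i * x i) := by
  have hi : univ.filter (fun k : Fin n => (i : ℕ) ≤ k ∧ (k : ℕ) < i + 1) = {i} := by
    ext k
    simp only [mem_filter, mem_univ, true_and, mem_singleton, Fin.ext_iff]
    omega
  rw [w_eq_add_sum (Nat.le_succ _), hi, sum_singleton]

theorem commute_w {a : W} {m : ℕ} (h : ∀ k : Fin n, (k : ℕ) < m → Commute a (y k * x k)) :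
    Commute a (w q x y m) :=
  (Commute.one_right a).add_right <| Commute.sum_right _ _ _ fun k hk =>
    (h k (mem_filter.mp hk).2).smul_right _

theorem qCommute_w {a : W} {p : K} {i m : ℕ} (him : i < m)
    (hsucc : QCommute p a (w q x y (i + 1)))
    (h : ∀ k : Fin n, i < k → QCommute p a (y k * x k)) :
    QCommute p a (w q x y m) := by
  rw [w_eq_add_sum him]
  exact hsucc.add_right <| QCommute.sum_right _ fun k hk =>
    (h k (by simp only [mem_filter] at hk; omega)).smul_right _

namespace Relations

theorem Q_ne_zero (hW : Relations q Q x y) (i j : Fin n) : Q i j ≠ 0 :=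
  left_ne_zero_of_mul_eq_one (hW.Q_mul_Q j i)

theorem commute_y_yx (hW : Relations q Q x y) {i k : Fin n} (h : k < i) :
    Commute (y i) (y k * x k) := by
  have := (hW.yy i k).mul_right ((hW.xy_of_lt k i h).symm (hW.Q_ne_zero i k))
  rwa [mul_inv_cancel₀ (hW.Q_ne_zero i k), QCommute.one_iff] at this

theorem qCommute_y_yx (hW : Relations q Q x y) {i k : Fin n} (h : i < k) :
    QCommute (q i)⁻¹ (y i) (y k * x k) := by
  have := (hW.yy i k).mul_right
    ((hW.xy_of_gt k i h).symm (mul_ne_zero (hW.q_ne_zero i) (hW.Q_ne_zero i k)))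
  rwa [mul_inv, mul_left_comm, mul_inv_cancel₀ (hW.Q_ne_zero i k), mul_one] at this

theorem commute_x_yx (hW : Relations q Q x y) {i k : Fin n} (h : k < i) :
    Commute (x i) (y k * x k) := by
  have := (hW.xy_of_gt i k h).mul_right
    ((hW.xx k i h).symm (mul_ne_zero (hW.q_ne_zero k) (hW.Q_ne_zero k i)))
  rwa [mul_inv_cancel₀ (mul_ne_zero (hW.q_ne_zero k) (hW.Q_ne_zero k i)),
    QCommute.one_iff] at this

theorem qCommute_x_yx (hW : Relations q Q x y) {i k : Fin n} (h : i < k) :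
    QCommute (q i) (x i) (y k * x k) := by
  have := (hW.xy_of_lt i k h).mul_right (hW.xx i k h)
  rwa [mul_left_comm, hW.Q_mul_Q, mul_one] at this

theorem commute_x_w (hW : Relations q Q x y) {i : Fin n} {m : ℕ} (h : m ≤ i) :
    Commute (x i) (w q x y m) :=
  commute_w fun _ hk => hW.commute_x_yx (Fin.lt_def.mpr (by omega))

theorem commute_y_w (hW : Relations q Q x y) {i : Fin n} {m : ℕ} (h : m ≤ i) :
    Commute (y i) (w q x y m) :=
  commute_w fun _ hk => hW.commute_y_yx (Fin.lt_def.mpr (by omega))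

theorem qCommute_x_w_succ (hW : Relations q Q x y) (i : Fin n) :
    QCommute (q i) (x i) (w q x y (i + 1)) := by
  have hxw : x i * w q x y i = w q x y i * x i := (hW.commute_x_w le_rfl).eq
  rw [QCommute, w_succ, mul_add, mul_smul_comm, ← mul_assoc, hW.xy_self, add_mul, hxw]
  simp only [add_mul, smul_mul_assoc, mul_assoc]
  module

theorem qCommute_w_succ_y (hW : Relations q Q x y) (i : Fin n) :
    QCommute (q i) (w q x y (i + 1)) (y i) := by
  have hyw : y i * w q x y i = w q x y i * y i := (hW.commute_y_w le_rfl).eq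
  rw [QCommute, w_succ, add_mul, smul_mul_assoc, mul_assoc, hW.xy_self, mul_add, ← hyw]
  simp only [mul_add, mul_smul_comm]
  module

theorem qCommute_x_w (hW : Relations q Q x y) {i : Fin n} {m : ℕ} (h : (i : ℕ) < m) :
    QCommute (q i) (x i) (w q x y m) :=
  qCommute_w h (hW.qCommute_x_w_succ i) fun _ hk => hW.qCommute_x_yx (Fin.lt_def.mpr hk)

theorem qCommute_y_w (hW : Relations q Q x y) {i : Fin n} {m : ℕ} (h : (i : ℕ) < m) :
    QCommute (q i)⁻¹ (y i) (w q x y m) :=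
  qCommute_w h ((hW.qCommute_w_succ_y i).symm (hW.q_ne_zero i)) fun _ hk =>
    hW.qCommute_y_yx (Fin.lt_def.mpr hk)

theorem commute_x_w_pow (hW : Relations q Q x y) {i : Fin n} {l : ℕ} (hq : q i ^ l = 1)
    (m : ℕ) : Commute (x i) (w q x y m ^ l) := by
  rcases lt_or_ge (i : ℕ) m with h | h
  · exact (hW.qCommute_x_w h).commute_pow hq
  · exact (hW.commute_x_w h).pow_right l

theorem commute_y_w_pow (hW : Relations q Q x y) {i : Fin n} {l : ℕ} (hq : q i ^ l = 1)
    (m : ℕ) : Commute (y i) (w q x y m ^ l) := by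
  rcases lt_or_ge (i : ℕ) m with h | h
  · exact (hW.qCommute_y_w h).commute_pow (by rw [inv_pow, hq, inv_one])
  · exact (hW.commute_y_w h).pow_right l

end Relations

end QuantumWeyl

theorem Subalgebra.mem_center_of_adjoin_eq_top {R A : Type*} [CommSemiring R] [Semiring A]
    [Algebra R A] {s : Set A} (hs : Algebra.adjoin R s = ⊤) {z : A}
    (hz : ∀ a ∈ s, Commute a z) : z ∈ Subalgebra.center R A := by
  rw [Subalgebra.mem_center_iff]
  intro b
  exact (Algebra.commute_of_mem_adjoin_of_forall_mem_commute (hs ▸ Algebra.mem_top)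
    fun a ha => (hz a ha).symm).symm.eq

theorem stmt17_general {W : Type*} [Ring W] [Algebra ℂ W] {n l : ℕ} (hl : 0 < l)
    {ε : ℂ} (hε : IsPrimitiveRoot ε l)
    (s : Fin n → ℤ)
    (σ : Fin n → Fin n → ℤ) (hσ : ∀ i j, σ j i = - σ i j)
    (x y : Fin n → W) (w : ℕ → W)
    (hw : ∀ m : ℕ, w m = 1 + ∑ k ∈ Finset.univ.filter (fun k : Fin n => (k : ℕ) < m),
      (ε ^ (s k) - 1) • (y k * x k))
    (hyy : ∀ i j, y i * y j = ε ^ (σ i j) • (y j * y i))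
    (hxx : ∀ i j, i < j → x i * x j = ε ^ (s i + σ i j) • (x j * x i))
    (hxylt : ∀ i j, i < j → x i * y j = ε ^ (σ j i) • (y j * x i))
    (hxygt : ∀ i j, j < i → x i * y j = ε ^ (s j + σ j i) • (y j * x i))
    (hxyeq : ∀ i : Fin n, x i * y i = ε ^ (s i) • (y i * x i) + w (i : ℕ))
    (hgen : Algebra.adjoin ℂ (Set.range x ∪ Set.range y) = ⊤) :
    (∀ i j : Fin n, (i : ℕ) ≤ (j : ℕ) →
      y i * w ((j : ℕ) + 1) = ε ^ (-(s i)) • (w ((j : ℕ) + 1) * y i) ∧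
      x i * w ((j : ℕ) + 1) = ε ^ (s i) • (w ((j : ℕ) + 1) * x i)) ∧
    (∀ i j : Fin n, (j : ℕ) < (i : ℕ) →
      y i * w ((j : ℕ) + 1) = w ((j : ℕ) + 1) * y i ∧
      x i * w ((j : ℕ) + 1) = w ((j : ℕ) + 1) * x i) ∧
    (∀ m : ℕ, ∀ i : Fin n,
      w m ^ l * x i = x i * w m ^ l ∧ w m ^ l * y i = y i * w m ^ l) ∧
    (∀ m : ℕ, w m ^ l ∈ Subalgebra.center ℂ W) := by
  have hε0 : ε ≠ 0 := hε.ne_zero hl.ne'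
  obtain rfl : w = QuantumWeyl.w (fun i => ε ^ s i) x y := funext hw
  have hW : QuantumWeyl.Relations (fun i => ε ^ s i) (fun i j => ε ^ σ i j) x y :=
    { q_ne_zero := fun i => zpow_ne_zero _ hε0
      Q_mul_Q := fun i j => by rw [← zpow_add₀ hε0, hσ, neg_add_cancel, zpow_zero]
      yy := hyy
      xx := fun i j h => by rw [QCommute, hxx i j h, zpow_add₀ hε0]
      xy_of_lt := hxylt
      xy_of_gt := fun i j h => by rw [QCommute, hxygt i j h, zpow_add₀ hε0]
      xy_self := hxyeq }
  have hroot : ∀ i, (ε ^ s i) ^ l = 1 := fun i => by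
    rw [← zpow_natCast, ← zpow_mul, mul_comm, zpow_mul, zpow_natCast, hε.pow_eq_one, one_zpow]
  have hpow : ∀ m i, Commute (x i) (QuantumWeyl.w _ x y m ^ l) ∧
      Commute (y i) (QuantumWeyl.w _ x y m ^ l) := fun m i =>
    ⟨hW.commute_x_w_pow (hroot i) m, hW.commute_y_w_pow (hroot i) m⟩
  refine ⟨fun i j hij => ⟨?_, hW.qCommute_x_w (by omega)⟩,
    fun i j hij => ⟨(hW.commute_y_w hij).eq, (hW.commute_x_w hij).eq⟩,
    fun m i => ⟨(hpow m i).1.eq.symm, (hpow m i).2.eq.symm⟩, fun m => ?_⟩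
  · rw [zpow_neg]
    exact hW.qCommute_y_w (by omega)
  · refine Subalgebra.mem_center_of_adjoin_eq_top hgen ?_
    rintro _ (⟨i, rfl⟩ | ⟨i, rfl⟩)
    exacts [(hpow m i).1, (hpow m i).2]

/-- in the quantum Weyl algebra at an admissible primitive `l`-th root
of unity `ε`, the elements `w_m = 1 + Σ_{k<m} (ε^{s_k} - 1) y_k x_k` satisfy
`y_i w_j = ε^{-s_i} w_j y_i` and `x_i w_j = ε^{s_i} w_j x_i` for `i ≤ j`, commute
with `x_i, y_i` for `i > j`, and consequently each `w_m^l` commutes with all the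
generators, i.e. is central. -/
theorem stmt17 {W : Type*} [Ring W] [Algebra ℂ W] {n l : ℕ} (hl : 0 < l)
    {ε : ℂ} (hε : IsPrimitiveRoot ε l)
    (s : Fin n → ℤ) (hcop : ∀ i, IsCoprime (l : ℤ) (s i))
    (σ : Fin n → Fin n → ℤ) (hσ : ∀ i j, σ j i = - σ i j)
    (x y : Fin n → W) (w : ℕ → W)
    (hw : ∀ m : ℕ, w m = 1 + ∑ k ∈ Finset.univ.filter (fun k : Fin n => (k : ℕ) < m),
      (ε ^ (s k) - 1) • (y k * x k))
    (hyy : ∀ i j, y i * y j = ε ^ (σ i j) • (y j * y i))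
    (hxx : ∀ i j, i < j → x i * x j = ε ^ (s i + σ i j) • (x j * x i))
    (hxylt : ∀ i j, i < j → x i * y j = ε ^ (σ j i) • (y j * x i))
    (hxygt : ∀ i j, j < i → x i * y j = ε ^ (s j + σ j i) • (y j * x i))
    (hxyeq : ∀ i : Fin n, x i * y i = ε ^ (s i) • (y i * x i) + w (i : ℕ))
    (hgen : Algebra.adjoin ℂ (Set.range x ∪ Set.range y) = ⊤) :
    (∀ i j : Fin n, (i : ℕ) ≤ (j : ℕ) →
      y i * w ((j : ℕ) + 1) = ε ^ (-(s i)) • (w ((j : ℕ) + 1) * y i) ∧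
      x i * w ((j : ℕ) + 1) = ε ^ (s i) • (w ((j : ℕ) + 1) * x i)) ∧
    (∀ i j : Fin n, (j : ℕ) < (i : ℕ) →
      y i * w ((j : ℕ) + 1) = w ((j : ℕ) + 1) * y i ∧
      x i * w ((j : ℕ) + 1) = w ((j : ℕ) + 1) * x i) ∧
    (∀ m : ℕ, ∀ i : Fin n,
      w m ^ l * x i = x i * w m ^ l ∧ w m ^ l * y i = y i * w m ^ l) ∧
    (∀ m : ℕ, w m ^ l ∈ Subalgebra.center ℂ W) :=
  stmt17_general hl hε s σ hσ x y w hw hyy hxx hxylt hxygt hxyeq hgen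
end
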